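/- Let Ω be a countable type equipped with a probability mass function p (the randomness of the hash functions), let m ≥ 1, N ≥ 1 be integers, and let g, g' : Ω → {0,1}^m. Let ε ≥ 0, δ ∈ [0,1], and set ε₀ := ε/N. Suppose Pr_{ω ∼ p}[ |{j ∈ [m] : g(ω)[j] ≠ g'(ω)[j]}| ≤ N ] ≥ 1 − δ. Define the mechanism M as: sample ω ∼ p, then output the vector obtained by applying the random response mechanism with parameter ε₀ independently to each coordinate of g(ω); define M' analogously with g'. Then for every set Z ⊆ {0,1}^m, Pr[M ∈ Z] ≤ e^{ε} · Pr[M' ∈ Z] + δ; i.e., the pair (M, M') satisfies the (ε,δ)-differential-privacy inequality. -/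
import Mathlib


/-- Probability that the random response mechanism with parameter `ε₀`
outputs the bit `v` on input bit `b`. -/
noncomputable def rrProb (ε₀ : ℝ) (b v : Bool) : ℝ :=
  if v = b then Real.exp ε₀ / (Real.exp ε₀ + 1) else 1 / (Real.exp ε₀ + 1)

lemma rrProb_nonneg (ε₀ : ℝ) (b v : Bool) : 0 ≤ rrProb ε₀ b v := by
  have h := Real.exp_pos ε₀
  unfold rrProb
  split_ifs <;> positivity

lemma rrProb_le (ε₀ : ℝ) (hε₀ : 0 ≤ ε₀) (b b' v : Bool) :
    rrProb ε₀ b v ≤ Real.exp ε₀ * rrProb ε₀ b' v := by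
  have h := Real.exp_pos ε₀
  have h1 : 1 ≤ Real.exp ε₀ := Real.one_le_exp hε₀
  have hd : 0 < Real.exp ε₀ + 1 := by linarith
  unfold rrProb
  split_ifs <;> rw [← mul_div_assoc, div_le_div_iff₀ hd hd] <;> nlinarith

lemma rrProb_sum (ε₀ : ℝ) (b : Bool) :
    ∑ v : Bool, rrProb ε₀ b v = 1 := by
  have h : Real.exp ε₀ + 1 ≠ 0 := by positivity
  cases b <;> simp [rrProb] <;> field_simp <;> ring

lemma phi_nonneg {m : ℕ} (ε₀ : ℝ) (b : Fin m → Bool) (Z : Finset (Fin m → Bool)) :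
    0 ≤ ∑ z ∈ Z, ∏ j, rrProb ε₀ (b j) (z j) :=
  Finset.sum_nonneg fun z _ => Finset.prod_nonneg fun j _ => rrProb_nonneg ε₀ (b j) (z j)

lemma phi_le_one {m : ℕ} (ε₀ : ℝ) (b : Fin m → Bool) (Z : Finset (Fin m → Bool)) :
    ∑ z ∈ Z, ∏ j, rrProb ε₀ (b j) (z j) ≤ 1 := by
  have h1 : ∑ z ∈ Z, ∏ j, rrProb ε₀ (b j) (z j)
      ≤ ∑ z : Fin m → Bool, ∏ j, rrProb ε₀ (b j) (z j) := by
    apply Finset.sum_le_sum_of_subset_of_nonneg (Finset.subset_univ Z)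
    intro z _ _
    exact Finset.prod_nonneg fun j _ => rrProb_nonneg ε₀ (b j) (z j)
  have h2 : ∑ z : Fin m → Bool, ∏ j, rrProb ε₀ (b j) (z j) = 1 := by
    have := Finset.prod_univ_sum (fun _ : Fin m => (Finset.univ : Finset Bool))
      (fun j v => rrProb ε₀ (b j) v)
    rw [Fintype.piFinset_univ] at this
    rw [← this]
    exact Finset.prod_eq_one fun i _ => rrProb_sum ε₀ (b i)
  linarith

lemma prod_bound {m : ℕ} (ε₀ : ℝ) (hε₀ : 0 ≤ ε₀) (N : ℕ) (b b' z : Fin m → Bool)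
    (h : (Finset.univ.filter fun j => b j ≠ b' j).card ≤ N) :
    ∏ j, rrProb ε₀ (b j) (z j) ≤ Real.exp (ε₀ * N) * ∏ j, rrProb ε₀ (b' j) (z j) := by
  have step : ∏ j, rrProb ε₀ (b j) (z j)
      ≤ ∏ j, (if b j ≠ b' j then Real.exp ε₀ else 1) * rrProb ε₀ (b' j) (z j) := by
    apply Finset.prod_le_prod (fun j _ => rrProb_nonneg ε₀ (b j) (z j))
    intro j _
    split_ifs with hj
    · exact rrProb_le ε₀ hε₀ (b j) (b' j) (z j)
    · push_neg at hj
      rw [hj, one_mul]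
  have hsplit : ∏ j, (if b j ≠ b' j then Real.exp ε₀ else 1) * rrProb ε₀ (b' j) (z j)
      = (∏ j, (if b j ≠ b' j then Real.exp ε₀ else 1)) * ∏ j, rrProb ε₀ (b' j) (z j) :=
    Finset.prod_mul_distrib
  have hc : (∏ j, (if b j ≠ b' j then Real.exp ε₀ else (1:ℝ)))
      = Real.exp ε₀ ^ (Finset.univ.filter fun j => b j ≠ b' j).card := by
    rw [Finset.prod_ite, Finset.prod_const, Finset.prod_const_one, mul_one]
  have hpow : Real.exp ε₀ ^ (Finset.univ.filter fun j => b j ≠ b' j).card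
      ≤ Real.exp (ε₀ * N) := by
    rw [← Real.exp_nat_mul]
    apply Real.exp_le_exp.mpr
    rw [mul_comm ε₀]
    exact mul_le_mul_of_nonneg_right (by exact_mod_cast h) hε₀
  have hprod_nonneg : 0 ≤ ∏ j, rrProb ε₀ (b' j) (z j) :=
    Finset.prod_nonneg fun j _ => rrProb_nonneg ε₀ (b' j) (z j)
  calc ∏ j, rrProb ε₀ (b j) (z j)
      ≤ (∏ j, (if b j ≠ b' j then Real.exp ε₀ else 1)) * ∏ j, rrProb ε₀ (b' j) (z j) := by
        rw [← hsplit]; exact step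
    _ ≤ Real.exp (ε₀ * N) * ∏ j, rrProb ε₀ (b' j) (z j) := by
        rw [hc]
        exact mul_le_mul_of_nonneg_right hpow hprod_nonneg

/-- Let `p` be a probability mass function on a countable type `Ω`
(the hash randomness) and let `g, g' : Ω → {0,1}^m` be the two Bloom-filter bit
arrays.  Set `ε₀ = ε / N`.  If with probability at least `1 - δ` (over `ω ∼ p`)
the arrays `g(ω)` and `g'(ω)` differ in at most `N` coordinates, then the
mechanisms obtained by sampling `ω ∼ p` and applying coordinatewise random
response with parameter `ε₀` to `g(ω)` (resp. `g'(ω)`) satisfy the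
`(ε, δ)`-differential-privacy inequality: for every set `Z ⊆ {0,1}^m`,
`Pr[M ∈ Z] ≤ e^ε Pr[M' ∈ Z] + δ`. -/
theorem stmt_3 {Ω : Type*} [Countable Ω] (p : Ω → ℝ)
    (hp0 : ∀ ω, 0 ≤ p ω) (hp1 : HasSum p 1)
    (m N : ℕ) (hm : 1 ≤ m) (hN : 1 ≤ N)
    (g g' : Ω → Fin m → Bool)
    (ε δ : ℝ) (hε : 0 ≤ ε) (hδ0 : 0 ≤ δ) (hδ1 : δ ≤ 1)
    (ε₀ : ℝ) (hε₀ : ε₀ = ε / N)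
    (hconc : 1 - δ ≤
      ∑' ω, if (Finset.univ.filter fun j => g ω j ≠ g' ω j).card ≤ N then p ω else 0) :
    ∀ Z : Finset (Fin m → Bool),
      (∑' ω, p ω * ∑ z ∈ Z, ∏ j, rrProb ε₀ (g ω j) (z j))
        ≤ Real.exp ε * (∑' ω, p ω * ∑ z ∈ Z, ∏ j, rrProb ε₀ (g' ω j) (z j)) + δ := by
  intro Z
  have hNne : (N : ℝ) ≠ 0 := Nat.cast_ne_zero.mpr (by omega)
  have hε₀0 : 0 ≤ ε₀ := by
    rw [hε₀]; positivity
  have hεN : ε₀ * N = ε := by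
    rw [hε₀]; field_simp
  set A : Ω → ℝ := fun ω => p ω * ∑ z ∈ Z, ∏ j, rrProb ε₀ (g ω j) (z j) with hA_def
  set B : Ω → ℝ := fun ω => p ω * ∑ z ∈ Z, ∏ j, rrProb ε₀ (g' ω j) (z j) with hB_def
  set q : Ω → ℝ := fun ω =>
    if (Finset.univ.filter fun j => g ω j ≠ g' ω j).card ≤ N then p ω else 0 with hq_def
  have hp : Summable p := hp1.summable
  have hA_nonneg : ∀ ω, 0 ≤ A ω := fun ω =>
    mul_nonneg (hp0 ω) (phi_nonneg ε₀ (g ω) Z)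
  have hB_nonneg : ∀ ω, 0 ≤ B ω := fun ω =>
    mul_nonneg (hp0 ω) (phi_nonneg ε₀ (g' ω) Z)
  have hA_le : ∀ ω, A ω ≤ p ω := fun ω =>
    (mul_le_of_le_one_right (hp0 ω) (phi_le_one ε₀ (g ω) Z))
  have hB_le : ∀ ω, B ω ≤ p ω := fun ω =>
    (mul_le_of_le_one_right (hp0 ω) (phi_le_one ε₀ (g' ω) Z))
  have hq_nonneg : ∀ ω, 0 ≤ q ω := fun ω => by
    simp only [hq_def]; split_ifs; exacts [hp0 ω, le_refl 0]
  have hq_le : ∀ ω, q ω ≤ p ω := fun ω => by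
    simp only [hq_def]; split_ifs; exacts [le_refl _, hp0 ω]
  have hA_sum : Summable A := Summable.of_nonneg_of_le hA_nonneg hA_le hp
  have hB_sum : Summable B := Summable.of_nonneg_of_le hB_nonneg hB_le hp
  have hq_sum : Summable q := Summable.of_nonneg_of_le hq_nonneg hq_le hp
  have point : ∀ ω, A ω ≤ Real.exp ε * B ω + (p ω - q ω) := by
    intro ω
    by_cases hgood : (Finset.univ.filter fun j => g ω j ≠ g' ω j).card ≤ N
    · have hq_eq : q ω = p ω := by simp [hq_def, hgood]
      rw [hq_eq, sub_self, add_zero]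
      have : ∑ z ∈ Z, ∏ j, rrProb ε₀ (g ω j) (z j)
          ≤ Real.exp ε * ∑ z ∈ Z, ∏ j, rrProb ε₀ (g' ω j) (z j) := by
        rw [Finset.mul_sum]
        apply Finset.sum_le_sum
        intro z _
        have := prod_bound ε₀ hε₀0 N (g ω) (g' ω) z hgood
        rwa [hεN] at this
      calc A ω = p ω * ∑ z ∈ Z, ∏ j, rrProb ε₀ (g ω j) (z j) := rfl
        _ ≤ p ω * (Real.exp ε * ∑ z ∈ Z, ∏ j, rrProb ε₀ (g' ω j) (z j)) :=
            mul_le_mul_of_nonneg_left this (hp0 ω)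
        _ = Real.exp ε * B ω := by ring
    · have hq_eq : q ω = 0 := by simp [hq_def, hgood]
      rw [hq_eq, sub_zero]
      have h1 : A ω ≤ p ω := hA_le ω
      have h2 : 0 ≤ Real.exp ε * B ω :=
        mul_nonneg (Real.exp_pos ε).le (hB_nonneg ω)
      linarith
  have hRHS_sum : Summable (fun ω => Real.exp ε * B ω + (p ω - q ω)) :=
    ((hB_sum.mul_left _).add (hp.sub hq_sum))
  have key : ∑' ω, A ω ≤ ∑' ω, (Real.exp ε * B ω + (p ω - q ω)) :=
    Summable.tsum_le_tsum point hA_sum hRHS_sum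
  have split : ∑' ω, (Real.exp ε * B ω + (p ω - q ω))
      = Real.exp ε * (∑' ω, B ω) + ((∑' ω, p ω) - ∑' ω, q ω) := by
    rw [Summable.tsum_add (hB_sum.mul_left _) (hp.sub hq_sum), tsum_mul_left,
      Summable.tsum_sub hp hq_sum]
  have hpsum : ∑' ω, p ω = 1 := hp1.tsum_eq
  have hqsum : 1 - δ ≤ ∑' ω, q ω := hconc
  calc ∑' ω, A ω ≤ Real.exp ε * (∑' ω, B ω) + ((∑' ω, p ω) - ∑' ω, q ω) := by
        rw [← split]; exact key
    _ ≤ Real.exp ε * (∑' ω, B ω) + δ := by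
        rw [hpsum]; linarith
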